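/- arXiv:2312.07909 — 4 statements merged into one kernel-verified Lean document; each statement's English description precedes it below -/
import Mathlib

section
/- Two subgroups H₁, H₂ of O(n) are conjugate in GL_n(ℝ) if and only if they are conjugate in O(n). Specifically, if H₁ = g H₂ g⁻¹ for some g ∈ GL_n(ℝ), then writing a singular value decomposition g = V D Uᵀ with U, V ∈ O(n) and D positive diagonal, one has H₁ = g₂ H₂ g₂⁻¹ for some g₂ ∈ O(n). -/
/-!
Polar decomposition: an invertible `g` factors as `g = v * |g|` with `v` orthogonal and
`|g| = √(gᵀ g)`. If `u` and `g u g⁻¹` are both orthogonal, then `uᵀ (gᵀ g) u = gᵀ g`, so `u`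
commutes with `gᵀ g` and hence with its square root `|g|`; therefore `g u g⁻¹ = v u v⁻¹`
with the same `v` for every `u ∈ H₂`.
-/

open Matrix
open scoped MatrixOrder

theorem Units.conj_eq_conj_mul_inv_of_commute {M : Type*} [Monoid M] (g s : Mˣ) {u : M}
    (h : Commute (s : M) u) : (g : M) * u * ↑g⁻¹ = ↑(g * s⁻¹) * u * ↑(g * s⁻¹)⁻¹ := by
  simp only [_root_.mul_inv_rev, inv_inv, Units.val_mul, mul_assoc]
  rw [← mul_assoc u, ← h.eq, mul_assoc, Units.inv_mul_cancel_left]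

theorem commute_star_mul_self_of_conj_mem_unitary {M : Type*} [Monoid M] [StarMul M] (g : Mˣ)
    {u : M} (hu : u ∈ unitary M) (hconj : (g : M) * u * ↑g⁻¹ ∈ unitary M) :
    Commute (star (g : M) * g) u := by
  refine ((commute_unitary_iff_star_left_conjugate hu).2 ?_).symm
  have h := congrArg Units.val
    ((Units.mul_inv_mem_unitary (g * Unitary.toUnits ⟨u, hu⟩) g).1 hconj)
  simpa [Units.coe_star, star_mul, mul_assoc] using h

section CFC

variable {A : Type*} [Ring A] [StarRing A] [TopologicalSpace A] [Algebra ℝ A]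
  [ContinuousFunctionalCalculus ℝ A IsSelfAdjoint] [PartialOrder A] [StarOrderedRing A]
  [NonnegSpectrumClass ℝ A] [IsTopologicalRing A] [T2Space A]

theorem isUnit_cfcAbs {a : A} (ha : IsUnit a) : IsUnit (CFC.abs a) :=
  (CFC.isUnit_sqrt_iff _ (star_mul_self_nonneg a)).2 (ha.star.mul ha)

theorem Units.exists_mem_unitary_conj_eq (g : Aˣ) :
    ∃ v ∈ unitary A, ∀ u ∈ unitary A, (g : A) * u * ↑g⁻¹ ∈ unitary A →
      (g : A) * u * ↑g⁻¹ = v * u * star v := by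
  set s := (isUnit_cfcAbs g.isUnit).unit
  have hs : star s * s = star g * g := Units.ext <| by
    rw [Units.val_mul, Units.coe_star, IsUnit.unit_spec,
      (CFC.abs_nonneg (g : A)).isSelfAdjoint.star_eq, CFC.abs_mul_abs, Units.val_mul,
      Units.coe_star]
  have hv : ((g * s⁻¹ : Aˣ) : A) ∈ unitary A := by
    simpa using (Units.mul_inv_mem_unitary g s).2 hs.symm
  refine ⟨_, hv, fun u hu hconj => ?_⟩
  have hcomm : Commute (s : A) u :=
    (commute_star_mul_self_of_conj_mem_unitary g hu hconj).cfcₙ_nnreal NNReal.sqrt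
  rw [g.conj_eq_conj_mul_inv_of_commute s hcomm,
    Units.inv_eq_of_mul_eq_one_right (Unitary.mul_star_self_of_mem hv)]

end CFC

theorem Matrix.mem_unitary_iff_transpose_mul_self {n R : Type*} [Fintype n] [DecidableEq n]
    [CommRing R] [StarRing R] [TrivialStar R] {A : Matrix n n R} :
    A ∈ unitary (Matrix n n R) ↔ Aᵀ * A = 1 := by
  rw [← conjTranspose_eq_transpose_of_trivial, ← star_eq_conjTranspose]
  exact mem_unitaryGroup_iff'

theorem conjugate_in_GL_iff_conjugate_in_O_general (n : ℕ)
    (H₁ H₂ : Set (Matrix (Fin n) (Fin n) ℝ))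
    (h₁O : ∀ A ∈ H₁, Aᵀ * A = 1) (h₂O : ∀ A ∈ H₂, Aᵀ * A = 1) :
    (∃ g : Matrix (Fin n) (Fin n) ℝ, IsUnit g.det ∧
      H₁ = (fun A => g * A * g⁻¹) '' H₂) ↔
    (∃ g₂ : Matrix (Fin n) (Fin n) ℝ, g₂ᵀ * g₂ = 1 ∧
      H₁ = (fun A => g₂ * A * g₂ᵀ) '' H₂) := by
  constructor
  · rintro ⟨g, hg, rfl⟩
    obtain ⟨v, hv, hconj⟩ := (nonsingInvUnit g hg).exists_mem_unitary_conj_eq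
    refine ⟨v, mem_unitary_iff_transpose_mul_self.1 hv, Set.image_congr fun A hA => ?_⟩
    have h := hconj A (mem_unitary_iff_transpose_mul_self.2 (h₂O A hA))
      (mem_unitary_iff_transpose_mul_self.2 (h₁O _ ⟨A, hA, rfl⟩))
    rwa [star_eq_conjTranspose, conjTranspose_eq_transpose_of_trivial] at h
  · rintro ⟨g, hg, rfl⟩
    exact ⟨g, isUnit_det_of_left_inverse hg, by rw [inv_eq_left_inv hg]⟩

/-- Two subgroups `H₁, H₂` of `O(n)` are conjugate in `GL_n(ℝ)` if and only
if they are conjugate in `O(n)`. -/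
theorem conjugate_in_GL_iff_conjugate_in_O (n : ℕ)
    (H₁ H₂ : Set (Matrix (Fin n) (Fin n) ℝ))
    (h₁O : ∀ A ∈ H₁, Aᵀ * A = 1) (h₂O : ∀ A ∈ H₂, Aᵀ * A = 1)
    (h₁one : (1 : Matrix (Fin n) (Fin n) ℝ) ∈ H₁)
    (h₁mul : ∀ A ∈ H₁, ∀ B ∈ H₁, A * B ∈ H₁)
    (h₁inv : ∀ A ∈ H₁, Aᵀ ∈ H₁)
    (h₂one : (1 : Matrix (Fin n) (Fin n) ℝ) ∈ H₂)
    (h₂mul : ∀ A ∈ H₂, ∀ B ∈ H₂, A * B ∈ H₂)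
    (h₂inv : ∀ A ∈ H₂, Aᵀ ∈ H₂) :
    (∃ g : Matrix (Fin n) (Fin n) ℝ, IsUnit g.det ∧
      H₁ = (fun A => g * A * g⁻¹) '' H₂) ↔
    (∃ g₂ : Matrix (Fin n) (Fin n) ℝ, g₂ᵀ * g₂ = 1 ∧
      H₁ = (fun A => g₂ * A * g₂ᵀ) '' H₂) :=
  conjugate_in_GL_iff_conjugate_in_O_general n H₁ H₂ h₁O h₂O
end

section
/- For any odd prime p, the reduction map GL_n(ℤ) → GL_n(ℤ/pℤ) is injective on every finite subgroup of GL_n(ℤ). Equivalently, if g ∈ GL_n(ℤ) has finite order and g ≡ I (mod p) for a prime p ≠ 2, then g = I. -/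
/-!
Some power `h` of a nontrivial finite-order `g ≡ 1 (mod p)` has prime order `q`. If
`h = 1 + p^a y` with `a ≥ 1`, expanding `(1 + p^a y)^q = 1` gives `q p^a y ≡ 0 (mod p^(2a))`,
and `p^(a+1) y ≡ 0 (mod p^(2a+1))` when `q = p`; the latter uses `p ≥ 3` to absorb the term
`p^(pa) y^p`. Either way `p ∣ y`, so `h - 1` is divisible by every power of `p` and `h = 1`.
As the matrix ring is not commutative, the binomial expansions are carried out in `ℤ[X]` and
evaluated at `y`.
-/

open Polynomial

theorem mul_sq_dvd_one_add_pow_sub_sub {R : Type*} [CommRing R] {p : ℕ} (hp : p.Prime)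
    (hp2 : p ≠ 2) {c z : R} (hpc : (p : R) ∣ c) (hcz : c ∣ z) :
    p * c ^ 2 ∣ (1 + z) ^ p - 1 - p * z := by
  have hsum : (1 + z) ^ p - 1 - p * z = ∑ j ∈ Finset.Ico 2 (p + 1), z ^ j * p.choose j := by
    have h2p : 2 ≤ p + 1 := by have := hp.two_le; omega
    rw [add_comm, add_pow, ← Finset.sum_range_add_sum_Ico _ h2p]
    simp only [Finset.sum_range_succ, Finset.range_one, Finset.sum_singleton, pow_zero, pow_one,
      one_pow, mul_one, Nat.choose_zero_right, Nat.choose_one_right, Nat.cast_one]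
    ring
  rw [hsum]
  refine Finset.dvd_sum fun j hj => ?_
  obtain ⟨h2j, hjp⟩ := Finset.mem_Ico.mp hj
  rcases (Nat.lt_succ_iff.mp hjp).lt_or_eq with hlt | hjp
  · rw [mul_comm (p : R)]
    exact mul_dvd_mul ((pow_dvd_pow_of_dvd hcz 2).trans (pow_dvd_pow z h2j))
      (Nat.cast_dvd_cast (hp.dvd_choose_self (by omega) hlt))
  · -- the last term `z ^ p` is divisible by `z ^ 3`, as `p ≥ 3`
    rw [hjp]
    have h3 : p * c ^ 2 ∣ z ^ 3 := by
      rw [pow_succ' z 2]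
      exact mul_dvd_mul (hpc.trans hcz) (pow_dvd_pow_of_dvd hcz 2)
    exact (h3.trans (pow_dvd_pow z (by have := hp.two_le; omega))).mul_right _

section Ring

variable {A : Type*} [Ring A]

theorem natCast_dvd_of_dvd_mul {p q : ℕ} (hpq : p.Coprime q) {y : A}
    (h : (p : A) ∣ q * y) : (p : A) ∣ y := by
  obtain ⟨u, v, huv⟩ := Nat.isCoprime_iff_coprime.mpr hpq
  obtain ⟨w, hw⟩ := h
  refine ⟨u * y + v * w, ?_⟩
  calc y = ((u * p + v * q : ℤ) : A) * y := by rw [huv, Int.cast_one, one_mul]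
    _ = p * (u * y + v * w) := by
      push_cast
      rw [mul_add, add_mul, mul_assoc, mul_assoc, hw, ← mul_assoc, ← mul_assoc,
        (Int.cast_commute u _).eq, (Int.cast_commute v _).eq]
      simp only [mul_assoc]

variable [IsAddTorsionFree A]

theorem natCast_dvd_mul_of_aeval_eq_zero {m r p : ℕ} (hm : m ≠ 0) {G : ℤ[X]} {y : A}
    (hy : aeval y ((m : ℤ[X]) * ((r : ℤ[X]) * X + (p : ℤ[X]) * G)) = 0) :
    (p : A) ∣ r * y := by
  simp only [map_mul, map_add, map_natCast, aeval_X] at hy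
  have hry : (r : A) * y + p * aeval y G = 0 :=
    IsAddTorsionFree.nsmul_right_injective hm (by simpa only [nsmul_eq_mul, smul_zero] using hy)
  exact ⟨-aeval y G, by rw [mul_neg]; exact eq_neg_of_add_eq_zero_left hry⟩

theorem natCast_dvd_of_one_add_pow_mul_pow_eq_one {p q a : ℕ} (hp : p.Prime) (hp2 : p ≠ 2)
    (hq : q.Prime) (ha : a ≠ 0) {y : A} (h : (1 + (p : A) ^ a * y) ^ q = 1) : (p : A) ∣ y := by
  obtain ⟨b, rfl⟩ : ∃ b, a = b + 1 := ⟨a - 1, by omega⟩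
  have hy : aeval y ((1 + (p : ℤ[X]) ^ (b + 1) * X) ^ q - 1) = 0 := by simp [h]
  by_cases hqp : q = p
  · subst hqp
    obtain ⟨F, hF⟩ := mul_sq_dvd_one_add_pow_sub_sub hp hp2
      (dvd_pow_self (q : ℤ[X]) b.add_one_ne_zero) (dvd_mul_right _ X)
    have hfac : (1 + (q : ℤ[X]) ^ (b + 1) * X) ^ q - 1 =
        ((q ^ (b + 2) : ℕ) : ℤ[X]) *
          (((1 : ℕ) : ℤ[X]) * X + (q : ℤ[X]) * ((q : ℤ[X]) ^ b * F)) := by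
      push_cast; linear_combination hF
    rw [hfac] at hy
    simpa using natCast_dvd_mul_of_aeval_eq_zero (pow_ne_zero _ hp.ne_zero) hy
  · obtain ⟨F, hF⟩ := sq_dvd_add_pow_sub_sub ((p : ℤ[X]) ^ (b + 1) * X) 1 q
    have hfac : (1 + (p : ℤ[X]) ^ (b + 1) * X) ^ q - 1 =
        ((p ^ (b + 1) : ℕ) : ℤ[X]) *
          ((q : ℤ[X]) * X + (p : ℤ[X]) * ((p : ℤ[X]) ^ b * X ^ 2 * F)) := by
      push_cast; linear_combination hF
    rw [hfac] at hy
    exact natCast_dvd_of_dvd_mul ((Nat.coprime_primes hp hq).mpr (Ne.symm hqp))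
      (natCast_dvd_mul_of_aeval_eq_zero (pow_ne_zero _ hp.ne_zero) hy)

theorem pow_dvd_sub_one_of_pow_prime_eq_one {p q : ℕ} (hp : p.Prime) (hp2 : p ≠ 2)
    (hq : q.Prime) {h : A} (hhq : h ^ q = 1) (hdvd : (p : A) ∣ h - 1) (a : ℕ) :
    (p : A) ^ a ∣ h - 1 := by
  induction a with
  | zero => simp
  | succ a ih =>
    rcases Nat.eq_zero_or_pos a with rfl | ha
    · simpa using hdvd
    obtain ⟨y, hy⟩ := ih
    obtain ⟨w, rfl⟩ := natCast_dvd_of_one_add_pow_mul_pow_eq_one hp hp2 hq ha.ne'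
      (y := y) (by rw [← hy, add_sub_cancel, hhq])
    exact ⟨w, by rw [hy, pow_succ, mul_assoc]⟩

end Ring

namespace Matrix

instance {m n α : Type*} [AddMonoid α] [IsAddTorsionFree α] : IsAddTorsionFree (Matrix m n α) :=
  Pi.instIsAddTorsionFree

variable {n : Type*} [Fintype n] [DecidableEq n]

theorem natCast_dvd_iff {α : Type*} [Semiring α] {c : ℕ} {M : Matrix n n α} :
    (c : Matrix n n α) ∣ M ↔ ∀ i j, (c : α) ∣ M i j := by
  constructor
  · rintro ⟨N, rfl⟩ i j
    rw [← nsmul_eq_mul, smul_apply, nsmul_eq_mul]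
    exact dvd_mul_right _ _
  · intro h
    choose N hN using h
    refine ⟨of N, ?_⟩
    ext i j
    rw [← nsmul_eq_mul]
    simp [hN]

theorem map_intCast_eq_zero_iff {p : ℕ} {M : Matrix n n ℤ} :
    M.map (Int.cast : ℤ → ZMod p) = 0 ↔ (p : Matrix n n ℤ) ∣ M := by
  simp [natCast_dvd_iff, ← ZMod.intCast_zmod_eq_zero_iff_dvd, ← Matrix.ext_iff]

theorem eq_zero_of_forall_natCast_pow_dvd {p : ℕ} (hp : 2 ≤ p) {M : Matrix n n ℤ}
    (h : ∀ a, (p : Matrix n n ℤ) ^ a ∣ M) : M = 0 := by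
  ext i j
  have hdvd := (natCast_dvd_iff (c := p ^ (M i j).natAbs) (M := M)).mp
    (by rw [Nat.cast_pow]; exact h _) i j
  refine Int.eq_zero_of_dvd_of_natAbs_lt_natAbs hdvd ?_
  simpa using Nat.lt_pow_self hp

theorem eq_one_of_pow_prime_eq_one {p q : ℕ} (hp : p.Prime) (hp2 : p ≠ 2) (hq : q.Prime)
    {g : Matrix n n ℤ} (hgq : g ^ q = 1) (hcong : g.map (Int.cast : ℤ → ZMod p) = 1) :
    g = 1 := by
  have hdvd : (p : Matrix n n ℤ) ∣ g - 1 := by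
    rw [← map_intCast_eq_zero_iff, Matrix.map_sub _ Int.cast_sub, hcong,
      Matrix.map_one _ Int.cast_zero Int.cast_one, sub_self]
  exact sub_eq_zero.mp (eq_zero_of_forall_natCast_pow_dvd hp.two_le
    (pow_dvd_sub_one_of_pow_prime_eq_one hp hp2 hq hgq hdvd))

end Matrix

theorem IsOfFinOrder.exists_prime_orderOf_pow {G : Type*} [Monoid G] {x : G}
    (hx : IsOfFinOrder x) (hx1 : x ≠ 1) : ∃ m, (orderOf (x ^ m)).Prime := by
  have hq : (orderOf x).minFac.Prime := Nat.minFac_prime (by rwa [Ne, orderOf_eq_one_iff])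
  refine ⟨orderOf x / (orderOf x).minFac, ?_⟩
  rwa [orderOf_pow_orderOf_div hx.orderOf_pos.ne' (Nat.minFac_dvd _)]

theorem minkowski_reduction_injective_general (n p : ℕ) (hp : p.Prime) (hp2 : p ≠ 2)
    (g : Matrix (Fin n) (Fin n) ℤ)
    (k : ℕ) (hk : 0 < k) (hgk : g ^ k = 1)
    (hcong : g.map (Int.cast : ℤ → ZMod p) = 1) :
    g = 1 := by
  by_contra hg1
  obtain ⟨m, hq⟩ :=
    (isOfFinOrder_iff_pow_eq_one.mpr ⟨k, hk, hgk⟩).exists_prime_orderOf_pow hg1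
  have hcong_pow : (g ^ m).map (Int.cast : ℤ → ZMod p) = 1 :=
    calc (g ^ m).map (Int.cast : ℤ → ZMod p) = (g.map Int.cast) ^ m :=
          Matrix.map_pow g (Int.castRingHom (ZMod p)) m
      _ = 1 := by rw [hcong, one_pow]
  have hgm : g ^ m = 1 :=
    Matrix.eq_one_of_pow_prime_eq_one hp hp2 hq (pow_orderOf_eq_one _) hcong_pow
  rw [hgm, orderOf_one] at hq
  exact Nat.not_prime_one hq

/-- Minkowski's theorem (1887): for any prime `p ≠ 2`, the reduction map
`GL_n(ℤ) → GL_n(ℤ/pℤ)` is injective on finite subgroups; equivalently, if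
`g ∈ GL_n(ℤ)` has finite order and `g ≡ I (mod p)`, then `g = I`. -/
theorem minkowski_reduction_injective (n p : ℕ) (hp : p.Prime) (hp2 : p ≠ 2)
    (g : Matrix (Fin n) (Fin n) ℤ) (hg : IsUnit g.det)
    (k : ℕ) (hk : 0 < k) (hgk : g ^ k = 1)
    (hcong : g.map (Int.cast : ℤ → ZMod p) = 1) :
    g = 1 :=
  minkowski_reduction_injective_general n p hp hp2 g k hk hgk hcong
end

section
/- For n ≤ 3, a positive definite symmetric S ∈ Sⁿ_{≻0} is Selling-reduced (i.e., Venkov-reduced with respect to A_n) if and only if all off-diagonal entries of the extended matrix S̃ are non-positive. -/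
open Matrix

def matA (n : ℕ) : Matrix (Fin n) (Fin n) ℝ :=
  Matrix.of fun i j => if i = j then (2 : ℝ) else 1

/-- The matrix `P = (I_n | −𝟙)` so that `S̃ = Pᵀ S P` is the Gram matrix
of `b₁, …, b_n, −b₁ − ⋯ − b_n`. -/
def matP (n : ℕ) : Matrix (Fin n) (Fin (n + 1)) ℝ :=
  Matrix.of fun i j => if (j : ℕ) = n then -1 else if (i : ℕ) = (j : ℕ) then 1 else 0

/-- The extended `(n+1)×(n+1)` Gram matrix `S̃`. -/
def extended {n : ℕ} (S : Matrix (Fin n) (Fin n) ℝ) :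
    Matrix (Fin (n + 1)) (Fin (n + 1)) ℝ :=
  (matP n)ᵀ * S * matP n

/-!
Let `v₀, …, vₙ` be the superbase `b₁, …, bₙ, -∑ bᵢ`, so that `S̃ᵢⱼ = vᵢᵀ S vⱼ`. Since
`A_n = P Pᵀ`, `Tr(S A_n) = Tr S̃`, and a change of basis `g` acts on the superbase through an
integral `(n+1)×(n+1)` matrix `T` with `Tr(g S gᵀ A_n) = Tr(T S̃ Tᵀ)`. The rows and columns of `S̃`
sum to zero, which gives Selling's formula `2 Tr(T S̃ Tᵀ) = -∑ᵢⱼ S̃ᵢⱼ ‖Tᵢ - Tⱼ‖²` (`Tᵢ` the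
columns of `T`). For a change of basis the columns of `T` are distinct and sum to zero, so
`‖Tᵢ - Tⱼ‖² ≥ 2 = ‖eᵢ - eⱼ‖²`; hence non-positive off-diagonal entries of `S̃` make `S` reduced.

Conversely, if `S̃ᵢⱼ > 0`, the superbase `-vᵢ, vⱼ, (vₖ + c vᵢ)_{k ≠ i, j}` with `c (n - 1) = 2`
has `∑ₖ S[uₖ] = Tr S̃ - 2c S̃ᵢⱼ < Tr S̃`. An integral `c > 0` exists exactly for `n = 2, 3`; for
`n = 1`, `S̃₀₁ = -S₀₀ < 0` by positivity.
-/

section Superbase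

variable (R : Type*) [CommRing R] (n : ℕ)

/-- `matP` over an arbitrary commutative ring, so that integral basis changes can be handled. -/
def superbaseMatrix : Matrix (Fin n) (Fin (n + 1)) R :=
  Matrix.of fun i j => if (j : ℕ) = n then -1 else if (i : ℕ) = (j : ℕ) then 1 else 0

def truncMatrix : Matrix (Fin n) (Fin (n + 1)) R :=
  Matrix.of fun i j => if j = i.castSucc then 1 else 0

variable {R n}

lemma superbaseMatrix_castSucc (i j : Fin n) :
    superbaseMatrix R n i j.castSucc = if i = j then 1 else 0 := by
  simp [superbaseMatrix, j.is_lt.ne, Fin.val_eq_val]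

lemma superbaseMatrix_last (i : Fin n) : superbaseMatrix R n i (Fin.last n) = -1 := by
  simp [superbaseMatrix]

lemma sum_superbaseMatrix_row (i : Fin n) : ∑ j, superbaseMatrix R n i j = 0 := by
  simp [Fin.sum_univ_castSucc, superbaseMatrix_castSucc, superbaseMatrix_last]

lemma sum_transpose_superbaseMatrix_mul_col {m : Type*} (X : Matrix (Fin n) m R) (c : m) :
    ∑ r, ((superbaseMatrix R n)ᵀ * X) r c = 0 := by
  simp only [mul_apply, transpose_apply]
  rw [Finset.sum_comm]
  simp [← Finset.sum_mul, sum_superbaseMatrix_row]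

lemma truncMatrix_mul_apply {m : Type*} (X : Matrix (Fin (n + 1)) m R) (i : Fin n) (c : m) :
    (truncMatrix R n * X) i c = X i.castSucc c := by
  simp [truncMatrix, mul_apply]

lemma truncMatrix_mul_transpose_superbaseMatrix :
    truncMatrix R n * (superbaseMatrix R n)ᵀ = 1 := by
  ext i j
  simp [truncMatrix_mul_apply, superbaseMatrix_castSucc, one_apply, eq_comm]

lemma transpose_superbaseMatrix_mul_truncMatrix_mul {m : Type*} {X : Matrix (Fin (n + 1)) m R}
    (hX : ∀ c, ∑ r, X r c = 0) : (superbaseMatrix R n)ᵀ * (truncMatrix R n * X) = X := by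
  ext r c
  rw [mul_apply]
  simp only [transpose_apply, truncMatrix_mul_apply]
  induction r using Fin.lastCases with
  | last =>
    have := hX c
    rw [Fin.sum_univ_castSucc] at this
    simp only [superbaseMatrix_last, neg_one_mul, Finset.sum_neg_distrib]
    linear_combination -this
  | cast r => simp [superbaseMatrix_castSucc]

lemma map_superbaseMatrix {S : Type*} [CommRing S] (f : R →+* S) :
    (superbaseMatrix R n).map f = superbaseMatrix S n := by
  ext i j
  simp [superbaseMatrix, apply_ite f]

lemma map_truncMatrix {S : Type*} [CommRing S] (f : R →+* S) :
    (truncMatrix R n).map f = truncMatrix S n := by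
  ext i j
  simp [truncMatrix, apply_ite f]

lemma injective_transpose_truncMatrix [Nontrivial R] :
    Function.Injective (truncMatrix R n)ᵀ := by
  intro a b h
  have hab (i : Fin n) : a = i.castSucc ↔ b = i.castSucc := by
    have := congrFun h i
    simp only [truncMatrix, transpose_apply, of_apply] at this
    split_ifs at this <;> simp_all
  induction a using Fin.lastCases with
  | last =>
    induction b using Fin.lastCases with
    | last => rfl
    | cast j => exact absurd ((hab j).2 rfl) (Fin.castSucc_lt_last j).ne'
  | cast i =>
    induction b using Fin.lastCases with
    | last => exact absurd ((hab i).1 rfl) (Fin.castSucc_lt_last i).ne'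
    | cast j => simpa using (hab j).2 rfl

end Superbase

section SuperbaseChange

variable {R : Type*} [CommRing R] {n : ℕ}

/-- The basis change of `Rⁿ` acting on the superbase (the rows of `(superbaseMatrix R n)ᵀ`)
through `T`, provided the columns of `T` sum to one. -/
def ofSuperbaseChange (T : Matrix (Fin (n + 1)) (Fin (n + 1)) R) : Matrix (Fin n) (Fin n) R :=
  truncMatrix R n * T * (superbaseMatrix R n)ᵀ

lemma transpose_superbaseMatrix_mul_ofSuperbaseChange {T : Matrix (Fin (n + 1)) (Fin (n + 1)) R}
    (hT : ∀ b, ∑ a, T a b = 1) :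
    (superbaseMatrix R n)ᵀ * ofSuperbaseChange T = T * (superbaseMatrix R n)ᵀ := by
  rw [ofSuperbaseChange, Matrix.mul_assoc, transpose_superbaseMatrix_mul_truncMatrix_mul]
  intro c
  simp only [mul_apply, transpose_apply]
  rw [Finset.sum_comm]
  simp [← Finset.sum_mul, hT, sum_superbaseMatrix_row]

lemma ofSuperbaseChange_mul (T : Matrix (Fin (n + 1)) (Fin (n + 1)) R)
    {T' : Matrix (Fin (n + 1)) (Fin (n + 1)) R} (hT' : ∀ b, ∑ a, T' a b = 1) :
    ofSuperbaseChange T * ofSuperbaseChange T' = ofSuperbaseChange (T * T') := by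
  rw [ofSuperbaseChange, Matrix.mul_assoc, transpose_superbaseMatrix_mul_ofSuperbaseChange hT',
    ofSuperbaseChange]
  simp only [Matrix.mul_assoc]

lemma isUnit_det_ofSuperbaseChange {T : Matrix (Fin (n + 1)) (Fin (n + 1)) R}
    (hT : ∀ b, ∑ a, T a b = 1) (hTT : T * T = 1) : IsUnit (ofSuperbaseChange T).det := by
  have : ofSuperbaseChange T * ofSuperbaseChange T = 1 := by
    rw [ofSuperbaseChange_mul T hT, hTT, ofSuperbaseChange, Matrix.mul_one,
      truncMatrix_mul_transpose_superbaseMatrix]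
  exact IsUnit.of_mul_eq_one _ (by rw [← det_mul, this, det_one])

lemma map_ofSuperbaseChange {S : Type*} [CommRing S] (f : R →+* S)
    (T : Matrix (Fin (n + 1)) (Fin (n + 1)) R) :
    (ofSuperbaseChange T).map f = ofSuperbaseChange (T.map f) := by
  simp [ofSuperbaseChange, Matrix.map_mul, transpose_map, map_superbaseMatrix, map_truncMatrix]

def toSuperbaseChange (g : Matrix (Fin n) (Fin n) R) : Matrix (Fin (n + 1)) (Fin (n + 1)) R :=
  (superbaseMatrix R n)ᵀ * g * truncMatrix R n

lemma transpose_superbaseMatrix_mul_eq_toSuperbaseChange_mul (g : Matrix (Fin n) (Fin n) R) :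
    (superbaseMatrix R n)ᵀ * g = toSuperbaseChange g * (superbaseMatrix R n)ᵀ := by
  rw [toSuperbaseChange, Matrix.mul_assoc _ (truncMatrix R n),
    truncMatrix_mul_transpose_superbaseMatrix, Matrix.mul_one]

lemma sum_toSuperbaseChange_col (g : Matrix (Fin n) (Fin n) R) (b : Fin (n + 1)) :
    ∑ a, toSuperbaseChange g a b = 0 := by
  rw [toSuperbaseChange, Matrix.mul_assoc]
  exact sum_transpose_superbaseMatrix_mul_col _ b

lemma injective_transpose_toSuperbaseChange [IsDomain R] {g : Matrix (Fin n) (Fin n) R}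
    (hg : g.det ≠ 0) : Function.Injective (toSuperbaseChange g)ᵀ := by
  have hcol (a : Fin (n + 1)) : (toSuperbaseChange g)ᵀ a =
      (superbaseMatrix R n)ᵀ *ᵥ (g *ᵥ (truncMatrix R n)ᵀ a) := by
    rw [toSuperbaseChange, mulVec_mulVec]
    ext r
    simp [mul_apply, mulVec, dotProduct]
  have hP : Function.Injective ((superbaseMatrix R n)ᵀ *ᵥ ·) := fun x y h => by
    simpa [mulVec_mulVec, truncMatrix_mul_transpose_superbaseMatrix] using
      congrArg (truncMatrix R n *ᵥ ·) h
  intro a b h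
  rw [hcol, hcol] at h
  exact injective_transpose_truncMatrix (mulVec_injective_of_det_ne_zero hg (hP h))

lemma map_toSuperbaseChange {S : Type*} [CommRing S] (f : R →+* S) (g : Matrix (Fin n) (Fin n) R) :
    (toSuperbaseChange g).map f = toSuperbaseChange (g.map f) := by
  simp [toSuperbaseChange, Matrix.map_mul, transpose_map, map_superbaseMatrix, map_truncMatrix]

end SuperbaseChange

section SellingFormula

variable {ι m : Type*} [Fintype ι] [Fintype m]

lemma two_mul_trace_mul_mul_transpose {R : Type*} [CommRing R] {B : Matrix ι ι R}
    (hrow : ∀ a, ∑ b, B a b = 0) (hcol : ∀ b, ∑ a, B a b = 0) (N : Matrix m ι R) :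
    2 * (N * B * Nᵀ).trace = -∑ a, ∑ b, B a b * ∑ r, (N r a - N r b) ^ 2 := by
  have hleft (r : m) : ∑ a, ∑ b, B a b * N r a ^ 2 = 0 := by
    simp [← Finset.sum_mul, hrow]
  have hright (r : m) : ∑ a, ∑ b, B a b * N r b ^ 2 = 0 := by
    rw [Finset.sum_comm]
    simp [← Finset.sum_mul, hcol]
  have hexpand (r : m) : ∑ a, ∑ b, B a b * (N r a - N r b) ^ 2 =
      ∑ a, ∑ b, B a b * N r a ^ 2 + ∑ a, ∑ b, B a b * N r b ^ 2 -
        2 * ∑ a, ∑ b, N r a * B a b * N r b := by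
    simp only [Finset.mul_sum, ← Finset.sum_add_distrib, ← Finset.sum_sub_distrib]
    congr! 2
    ring
  calc 2 * (N * B * Nᵀ).trace = 2 * ∑ r, ∑ a, ∑ b, N r a * B a b * N r b := by
        simp only [trace, Matrix.diag, mul_apply, transpose_apply, Finset.sum_mul]
        congr 1
        refine Finset.sum_congr rfl fun r _ => Finset.sum_comm
    _ = -∑ r, ∑ a, ∑ b, B a b * (N r a - N r b) ^ 2 := by
        simp only [hexpand, hleft, hright, Finset.mul_sum]
        simp
    _ = -∑ a, ∑ b, B a b * ∑ r, (N r a - N r b) ^ 2 := by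
        simp only [Finset.mul_sum]
        rw [Finset.sum_comm]
        congr! 2 with a
        exact Finset.sum_comm

lemma sum_sq_one_apply_sub_one_apply {R : Type*} [CommRing R] [DecidableEq ι] {a b : ι}
    (hab : a ≠ b) :
    ∑ r, ((1 : Matrix ι ι R) r a - (1 : Matrix ι ι R) r b) ^ 2 = 2 := by
  simp [one_apply, sub_sq, Finset.sum_add_distrib, Finset.sum_sub_distrib, hab.symm]
  norm_num

lemma trace_le_trace_mul_mul_transpose {B : Matrix ι ι ℝ} (hrow : ∀ a, ∑ b, B a b = 0)
    (hcol : ∀ b, ∑ a, B a b = 0) (hoff : ∀ a b, a ≠ b → B a b ≤ 0) (N : Matrix m ι ℝ)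
    (hN : ∀ a b, a ≠ b → 2 ≤ ∑ r, (N r a - N r b) ^ 2) : B.trace ≤ (N * B * Nᵀ).trace := by
  classical
  have hB := two_mul_trace_mul_mul_transpose hrow hcol (1 : Matrix ι ι ℝ)
  rw [Matrix.one_mul, transpose_one, Matrix.mul_one] at hB
  have hle : ∑ a, ∑ b, B a b * ∑ r, (N r a - N r b) ^ 2 ≤
      ∑ a, ∑ b, B a b * ∑ r, ((1 : Matrix ι ι ℝ) r a - (1 : Matrix ι ι ℝ) r b) ^ 2 := by
    refine Finset.sum_le_sum fun a _ => Finset.sum_le_sum fun b _ => ?_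
    rcases eq_or_ne a b with rfl | hab
    · simp
    · rw [sum_sq_one_apply_sub_one_apply hab]
      exact mul_le_mul_of_nonpos_left (hN a b hab) (hoff a b hab)
  linarith [two_mul_trace_mul_mul_transpose hrow hcol N]

end SellingFormula

lemma two_le_sum_sq_of_sum_eq_zero {ι : Type*} [Fintype ι] {z : ι → ℤ} (hsum : ∑ r, z r = 0)
    (hz : z ≠ 0) : 2 ≤ ∑ r, z r ^ 2 := by
  classical
  obtain ⟨r, hr⟩ := Function.ne_iff.mp hz
  have habs : 2 * |z r| ≤ ∑ s, |z s| := by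
    have hrest : ∑ s ∈ Finset.univ.erase r, z s = -z r := by
      rw [← Finset.add_sum_erase _ _ (Finset.mem_univ r)] at hsum
      linarith
    calc 2 * |z r| = |z r| + |∑ s ∈ Finset.univ.erase r, z s| := by rw [hrest, abs_neg]; ring
      _ ≤ |z r| + ∑ s ∈ Finset.univ.erase r, |z s| := by gcongr; exact Finset.abs_sum_le_sum_abs _ _
      _ = ∑ s, |z s| := Finset.add_sum_erase _ (fun s => |z s|) (Finset.mem_univ r)
  have hsq : ∑ s, |z s| ≤ ∑ s, z s ^ 2 :=
    Finset.sum_le_sum fun s _ => (Int.le_self_sq |z s|).trans_eq (sq_abs (z s))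
  have : 1 ≤ |z r| := Int.one_le_abs hr
  linarith

section SellingMove

variable {ι R : Type*} [DecidableEq ι] [CommRing R]

/-- Row `a` is `eₐ + wₐ eᵢ` with `w = c𝟙 - (c + 2)eᵢ - c eⱼ`: the superbase move
`vᵢ ↦ -vᵢ`, `vⱼ ↦ vⱼ`, `vₖ ↦ vₖ + c vᵢ`. -/
def sellingMove (i j : ι) (c : R) : Matrix ι ι R :=
  1 + vecMulVec (c • 1 - (c + 2) • Pi.single i 1 - c • Pi.single j 1) (Pi.single i 1)

lemma map_sellingMove {S : Type*} [CommRing S] (f : R →+* S) (i j : ι) (c : R) :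
    (sellingMove i j c).map f = sellingMove i j (f c) := by
  ext a b
  simp [sellingMove, vecMulVec_apply, Pi.single_apply, one_apply, apply_ite f, map_ofNat]

variable [Fintype ι]

lemma sellingMove_mul_self {i j : ι} (hij : i ≠ j) (c : R) :
    sellingMove i j c * sellingMove i j c = 1 := by
  simp only [sellingMove, add_mul, mul_add, Matrix.one_mul, Matrix.mul_one,
    vecMulVec_mul_vecMulVec]
  simp [hij]
  module

lemma sum_sellingMove_col {i j : ι} {c : R} (hc : c * ((Fintype.card ι : R) - 2) = 2) (b : ι) :
    ∑ a, sellingMove i j c a b = 1 := by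
  have hw : (Fintype.card ι : R) * c - (c + 2) - c = 0 := by linear_combination hc
  simp [sellingMove, one_apply, vecMulVec_apply, Finset.sum_add_distrib, Finset.sum_sub_distrib,
    Pi.single_apply, hw]

lemma trace_one_add_vecMulVec_single_mul_mul_transpose (w : ι → R) (i : ι) (B : Matrix ι ι R) :
    ((1 + vecMulVec w (Pi.single i 1)) * B * (1 + vecMulVec w (Pi.single i 1))ᵀ).trace =
      B.trace + ∑ k, w k * (B i k + B k i) + (∑ k, w k ^ 2) * B i i := by
  simp only [trace, add_mul, one_mul, transpose_add, transpose_one, transpose_vecMulVec, mul_add,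
    mul_one, diag_apply, Matrix.add_apply, mul_apply, vecMulVec_apply, Pi.single_apply, mul_ite,
    mul_zero, ite_mul, zero_mul, Finset.sum_ite_eq', Finset.mem_univ, ↓reduceIte,
    Finset.sum_add_distrib]
  have hcol : ∑ k, B k i * w k = ∑ k, w k * B k i :=
    Finset.sum_congr rfl fun _ _ => mul_comm _ _
  have hdiag : ∑ k, w k * B i i * w k = (∑ k, w k ^ 2) * B i i := by
    rw [Finset.sum_mul]
    exact Finset.sum_congr rfl fun _ _ => by ring
  rw [hcol, hdiag]
  ring

lemma trace_sellingMove_mul_mul_transpose {B : Matrix ι ι R} (hrow : ∀ a, ∑ b, B a b = 0)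
    (hcol : ∀ b, ∑ a, B a b = 0) {i j : ι} (hij : i ≠ j) {c : R}
    (hc : c * ((Fintype.card ι : R) - 2) = 2) :
    (sellingMove i j c * B * (sellingMove i j c)ᵀ).trace = B.trace - c * (B i j + B j i) := by
  rw [sellingMove, trace_one_add_vecMulVec_single_mul_mul_transpose]
  simp [Pi.single_apply, sub_mul, add_mul, Finset.sum_sub_distrib, Finset.sum_add_distrib,
    ← Finset.mul_sum, hrow, hcol, sub_sq, ite_mul, mul_ite, hij.symm]
  linear_combination (c * B i i) * hc

end SellingMove

section SellingReduction

variable {n : ℕ}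

lemma matP_eq_superbaseMatrix : matP n = superbaseMatrix ℝ n := rfl

lemma matA_eq_matP_mul_transpose : matA n = matP n * (matP n)ᵀ := by
  ext i j
  rw [mul_apply, Fin.sum_univ_castSucc]
  simp only [matA, of_apply, matP_eq_superbaseMatrix, superbaseMatrix_castSucc, transpose_apply,
    mul_ite, mul_one, mul_zero, Finset.sum_ite_eq, Finset.mem_univ, ↓reduceIte,
    superbaseMatrix_last, mul_neg, neg_neg]
  split_ifs <;> norm_num

lemma extended_transpose (S : Matrix (Fin n) (Fin n) ℝ) : (extended S)ᵀ = extended Sᵀ := by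
  simp [extended, transpose_mul, Matrix.mul_assoc]

lemma sum_extended_col (S : Matrix (Fin n) (Fin n) ℝ) (j : Fin (n + 1)) :
    ∑ i, extended S i j = 0 := by
  rw [extended, Matrix.mul_assoc]
  exact sum_transpose_superbaseMatrix_mul_col _ j

lemma sum_extended_row (S : Matrix (Fin n) (Fin n) ℝ) (i : Fin (n + 1)) :
    ∑ j, extended S i j = 0 := by
  simpa [← extended_transpose] using sum_extended_col Sᵀ i

lemma trace_mul_matA_of_transpose_matP_mul_eq {G : Matrix (Fin n) (Fin n) ℝ}
    {T : Matrix (Fin (n + 1)) (Fin (n + 1)) ℝ} (h : (matP n)ᵀ * G = T * (matP n)ᵀ)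
    (S : Matrix (Fin n) (Fin n) ℝ) :
    (G * S * Gᵀ * matA n).trace = (T * extended S * Tᵀ).trace := by
  have h' : Gᵀ * matP n = matP n * Tᵀ := by
    simpa [transpose_mul] using congrArg transpose h
  calc (G * S * Gᵀ * matA n).trace = ((matP n)ᵀ * G * S * (Gᵀ * matP n)).trace := by
        rw [matA_eq_matP_mul_transpose, ← Matrix.mul_assoc, trace_mul_comm]
        simp only [Matrix.mul_assoc]
    _ = (T * extended S * Tᵀ).trace := by
        rw [h, h', extended]
        simp only [Matrix.mul_assoc]

lemma trace_mul_matA (S : Matrix (Fin n) (Fin n) ℝ) : (S * matA n).trace = (extended S).trace := by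
  simpa using trace_mul_matA_of_transpose_matP_mul_eq (G := 1) (T := 1) (by simp) S

def IsSellingReduced (S : Matrix (Fin n) (Fin n) ℝ) : Prop :=
  ∀ g : Matrix (Fin n) (Fin n) ℤ, IsUnit g.det →
    (S * matA n).trace ≤
      ((g.map (Int.cast : ℤ → ℝ)) * S * (g.map (Int.cast : ℤ → ℝ))ᵀ * matA n).trace

lemma isSellingReduced_of_extended_nonpos {S : Matrix (Fin n) (Fin n) ℝ}
    (h : ∀ i j, i ≠ j → extended S i j ≤ 0) : IsSellingReduced S := by
  intro g hg
  have hlift : (toSuperbaseChange g).map (Int.cast : ℤ → ℝ) =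
      toSuperbaseChange (g.map (Int.cast : ℤ → ℝ)) :=
    map_toSuperbaseChange (Int.castRingHom ℝ) g
  rw [trace_mul_matA, trace_mul_matA_of_transpose_matP_mul_eq
    (transpose_superbaseMatrix_mul_eq_toSuperbaseChange_mul _), ← hlift]
  refine trace_le_trace_mul_mul_transpose (sum_extended_row S) (sum_extended_col S) h _
    fun a b hab => ?_
  have hne : (fun r => toSuperbaseChange g r a - toSuperbaseChange g r b) ≠ 0 := fun h0 =>
    hab (injective_transpose_toSuperbaseChange hg.ne_zero
      (funext fun r => sub_eq_zero.mp (congrFun h0 r)))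
  have hsum : ∑ r, (toSuperbaseChange g r a - toSuperbaseChange g r b) = 0 := by
    simp [Finset.sum_sub_distrib, sum_toSuperbaseChange_col]
  simpa using (Int.cast_le (R := ℝ)).mpr (two_le_sum_sq_of_sum_eq_zero hsum hne)

lemma IsSellingReduced.extended_add_extended_swap_nonpos {S : Matrix (Fin n) (Fin n) ℝ}
    (h : IsSellingReduced S) {c : ℤ} (hc0 : 0 < c) (hc : c * ((n : ℤ) - 1) = 2)
    {i j : Fin (n + 1)} (hij : i ≠ j) : extended S i j + extended S j i ≤ 0 := by
  have hcardℤ : c * ((Fintype.card (Fin (n + 1)) : ℤ) - 2) = 2 := by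
    simp only [Fintype.card_fin]
    push_cast
    linear_combination hc
  have hcardℝ : (c : ℝ) * ((Fintype.card (Fin (n + 1)) : ℝ) - 2) = 2 := by
    exact_mod_cast hcardℤ
  have hmap : (ofSuperbaseChange (sellingMove i j c)).map (Int.cast : ℤ → ℝ) =
      ofSuperbaseChange (sellingMove i j (c : ℝ)) := by
    have := map_ofSuperbaseChange (Int.castRingHom ℝ) (sellingMove i j c)
    rw [map_sellingMove] at this
    exact this
  have hle := h _ (isUnit_det_ofSuperbaseChange (sum_sellingMove_col hcardℤ)
    (sellingMove_mul_self hij c))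
  rw [hmap, trace_mul_matA_of_transpose_matP_mul_eq
    (transpose_superbaseMatrix_mul_ofSuperbaseChange (sum_sellingMove_col hcardℝ)),
    trace_sellingMove_mul_mul_transpose (sum_extended_row S) (sum_extended_col S) hij hcardℝ,
    trace_mul_matA] at hle
  have : (0 : ℝ) < c := by exact_mod_cast hc0
  nlinarith

lemma IsSellingReduced.extended_nonpos {S : Matrix (Fin n) (Fin n) ℝ} (hn : n ≤ 3)
    (hS : S.PosDef) (h : IsSellingReduced S) {i j : Fin (n + 1)} (hij : i ≠ j) :
    extended S i j ≤ 0 := by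
  have hsymm : extended S j i = extended S i j := by
    rw [← transpose_apply (extended S), extended_transpose,
      ← conjTranspose_eq_transpose_of_trivial, hS.isHermitian.eq]
  interval_cases n
  · exact absurd (Fin.ext (by omega)) hij
  · have : extended S i j = -S 0 0 := by
      fin_cases i <;> fin_cases j <;> simp_all [extended, matP, mul_apply]
    linarith [hS.diag_pos (i := 0)]
  · linarith [h.extended_add_extended_swap_nonpos (c := 2) (by norm_num) (by norm_num) hij]
  · linarith [h.extended_add_extended_swap_nonpos (c := 1) (by norm_num) (by norm_num) hij]

end SellingReduction

/-- For `n ≤ 3`, a positive definite symmetric `S` is Selling-reduced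
(Venkov-reduced with respect to `A_n`, i.e. `Trace(S A_n) ≤ Trace(gSgᵀ A_n)`
for all `g ∈ GL_n(ℤ)`) if and only if all off-diagonal entries of the
extended matrix `S̃` are non-positive. -/
theorem selling_reduced_iff_offdiag_nonpos (n : ℕ) (hn : n ≤ 3)
    (S : Matrix (Fin n) (Fin n) ℝ) (hS : S.PosDef) :
    (∀ g : Matrix (Fin n) (Fin n) ℤ, IsUnit g.det →
      (S * matA n).trace ≤
        ((g.map (Int.cast : ℤ → ℝ)) * S * (g.map (Int.cast : ℤ → ℝ))ᵀ * matA n).trace) ↔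
    (∀ i j : Fin (n + 1), i ≠ j → extended S i j ≤ 0) :=
  ⟨fun h _ _ => IsSellingReduced.extended_nonpos hn hS h, isSellingReduced_of_extended_nonpos⟩
end

section
/- The Gauss reduction algorithm terminates: given any positive definite 2×2 symmetric matrix S, iterating the transformation S ↦ gSgᵀ with g = [[0,1],[1,m]], where m is the integer nearest to −s₁₂/s₂₂, reaches after finitely many steps a matrix with s₁₁ ≤ s₂₂, and after a possible sign change of the first basis vector satisfies 0 ≤ −2s₁₂ ≤ s₁₁ ≤ s₂₂. -/
/-!
After one step the form is size-reduced, `|2 s₁₂| ≤ s₁₁`, and every later step keeps it so.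
If the algorithm never stopped, `s₂₂` would strictly decrease; for a size-reduced form this
forces the nearest integer `m` to satisfy `|m| ≥ 2`, and then the new `s₂₂` is less than a
third of the old one. Hence the products `s₁₁ s₂₂` of the successive forms tend to `0`, while
they are bounded below by the determinant, which every step preserves.
-/

open Matrix

/-- One step of the Gauss reduction algorithm: `S ↦ g S gᵀ` with
`g = [[0,1],[1,m]]`, where `m` is the integer nearest to `−s₁₂/s₂₂`. -/
noncomputable def gaussStep (S : Matrix (Fin 2) (Fin 2) ℝ) :
    Matrix (Fin 2) (Fin 2) ℝ :=
  let m : ℤ := round (-(S 0 1) / S 1 1)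
  !![(0 : ℝ), 1; 1, (m : ℝ)] * S * (!![(0 : ℝ), 1; 1, (m : ℝ)])ᵀ

open Filter Topology

theorem tendsto_zero_of_succ_le_mul {c : ℕ → ℝ} {r : ℝ} (hc : ∀ k, 0 ≤ c k) (hr₀ : 0 ≤ r)
    (hr₁ : r < 1) (h : ∀ k, c (k + 1) ≤ r * c k) : Tendsto c atTop (𝓝 0) := by
  have hgeom : Tendsto (fun n ↦ r ^ n * c 0) atTop (𝓝 0) := by
    simpa using (tendsto_pow_atTop_nhds_zero_of_lt_one hr₀ hr₁).mul_const (c 0)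
  exact squeeze_zero hc (fun n ↦ le_geom hr₀ n fun k _ ↦ h k) hgeom

theorem abs_add_round_neg_div_mul_le {α : Type*} [Field α] [LinearOrder α]
    [IsStrictOrderedRing α] [FloorRing α] (b : α) {c : α} (hc : 0 < c) :
    |b + round (-b / c) * c| ≤ c / 2 := by
  have hround : b + round (-b / c) * c = -((-b / c - round (-b / c)) * c) := by
    field_simp; ring
  rw [hround, abs_neg, abs_mul, abs_of_pos hc]
  linarith [mul_le_mul_of_nonneg_right (abs_sub_round (-b / c)) hc.le]

noncomputable def gaussMultiplier (S : Matrix (Fin 2) (Fin 2) ℝ) : ℤ :=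
  round (-(S 0 1) / S 1 1)

def IsSizeReduced (S : Matrix (Fin 2) (Fin 2) ℝ) : Prop :=
  |2 * S 0 1| ≤ S 0 0

theorem gaussStep_eq_mul_mul_transpose (S : Matrix (Fin 2) (Fin 2) ℝ) :
    gaussStep S = !![0, 1; 1, (gaussMultiplier S : ℝ)] * S *
      (!![0, 1; 1, (gaussMultiplier S : ℝ)])ᵀ :=
  rfl

theorem gaussStep_eq (S : Matrix (Fin 2) (Fin 2) ℝ) :
    gaussStep S = !![S 1 1, S 1 0 + gaussMultiplier S * S 1 1;
      S 0 1 + gaussMultiplier S * S 1 1,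
      S 0 0 + gaussMultiplier S * (S 0 1 + S 1 0) + (gaussMultiplier S : ℝ) ^ 2 * S 1 1] := by
  rw [gaussStep_eq_mul_mul_transpose]
  ext i j
  fin_cases i <;> fin_cases j <;> simp [mul_apply, Fin.sum_univ_two, vecMul, dotProduct] <;> ring

theorem gaussStep_zero_zero (S : Matrix (Fin 2) (Fin 2) ℝ) : gaussStep S 0 0 = S 1 1 := by
  simp [gaussStep_eq]

theorem gaussStep_zero_one (S : Matrix (Fin 2) (Fin 2) ℝ) :
    gaussStep S 0 1 = S 1 0 + gaussMultiplier S * S 1 1 := by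
  simp [gaussStep_eq]

theorem gaussStep_one_one (S : Matrix (Fin 2) (Fin 2) ℝ) :
    gaussStep S 1 1 =
      S 0 0 + gaussMultiplier S * (S 0 1 + S 1 0) + (gaussMultiplier S : ℝ) ^ 2 * S 1 1 := by
  simp [gaussStep_eq]

theorem det_gaussStep (S : Matrix (Fin 2) (Fin 2) ℝ) : (gaussStep S).det = S.det := by
  rw [gaussStep_eq_mul_mul_transpose, det_mul, det_mul, det_transpose]
  simp [det_fin_two_of]

namespace Matrix.PosDef

variable {S : Matrix (Fin 2) (Fin 2) ℝ}

theorem apply_one_zero (hS : S.PosDef) : S 1 0 = S 0 1 := by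
  simpa using hS.isHermitian.apply 0 1

theorem gaussStep (hS : S.PosDef) : (_root_.gaussStep S).PosDef := by
  set B : Matrix (Fin 2) (Fin 2) ℝ := !![0, 1; 1, (gaussMultiplier S : ℝ)]
  have hB : IsUnit B.det := by simp [B, det_fin_two]
  rw [gaussStep_eq_mul_mul_transpose, ← conjTranspose_eq_transpose_of_trivial]
  exact hS.mul_mul_conjTranspose_same
    (vecMul_injective_iff_isUnit.2 ((isUnit_iff_isUnit_det B).2 hB))

theorem iterate_gaussStep (hS : S.PosDef) (k : ℕ) : (_root_.gaussStep^[k] S).PosDef := by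
  induction k with
  | zero => exact hS
  | succ k ih => rw [Function.iterate_succ_apply']; exact ih.gaussStep

theorem isSizeReduced_gaussStep (hS : S.PosDef) : IsSizeReduced (_root_.gaussStep S) := by
  rw [IsSizeReduced, gaussStep_zero_zero, gaussStep_zero_one, hS.apply_one_zero, abs_mul,
    abs_two, gaussMultiplier]
  linarith [abs_add_round_neg_div_mul_le (S 0 1) (hS.diag_pos (i := 1))]

end Matrix.PosDef

theorem three_mul_lt_of_gaussStep_one_one_lt {S : Matrix (Fin 2) (Fin 2) ℝ} (hS : S.PosDef)
    (hred : IsSizeReduced S) (hlt : S 1 1 < S 0 0) (hstep : gaussStep S 1 1 < S 1 1) :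
    3 * S 1 1 < S 0 0 := by
  set m := gaussMultiplier S
  set M : ℝ := |(m : ℝ)|
  have hc : 0 < S 1 1 := hS.diag_pos
  have hmb : -(M * S 0 0) ≤ m * (S 0 1 + S 1 0) := by
    rw [hS.apply_one_zero, ← two_mul, mul_left_comm]
    nlinarith [neg_abs_le ((m : ℝ) * (2 * S 0 1)), abs_mul (m : ℝ) (2 * S 0 1),
      mul_le_mul_of_nonneg_left hred (abs_nonneg (m : ℝ))]
  have hlow : (M - 1) * ((M + 1) * S 1 1 - S 0 0) ≤ gaussStep S 1 1 - S 1 1 := by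
    rw [gaussStep_one_one, ← sq_abs (m : ℝ)]
    nlinarith
  have hM : M = 0 ∨ M = 1 ∨ 2 ≤ M := by
    have : |m| = 0 ∨ |m| = 1 ∨ 2 ≤ |m| := by have := abs_nonneg m; omega
    simp only [M, ← Int.cast_abs]
    exact_mod_cast this
  -- `m = 0` and `|m| = 1` would not decrease `s₂₂`; `|m| ≥ 2` forces `(|m| + 1) s₂₂ < s₁₁`.
  rcases hM with h | h | h
  · rw [h] at hlow; linarith
  · rw [h] at hlow; linarith
  · have hfactor : (M + 1) * S 1 1 - S 0 0 < 0 := by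
      by_contra! hnonneg
      nlinarith [mul_nonneg (by linarith : (0 : ℝ) ≤ M - 1) hnonneg]
    nlinarith

theorem det_iterate_gaussStep (S : Matrix (Fin 2) (Fin 2) ℝ) (k : ℕ) :
    (gaussStep^[k] S).det = S.det := by
  induction k with
  | zero => rfl
  | succ k ih => rw [Function.iterate_succ_apply', det_gaussStep, ih]

theorem exists_iterate_gaussStep_zero_zero_le {S : Matrix (Fin 2) (Fin 2) ℝ} (hS : S.PosDef) :
    ∃ k, (gaussStep^[k + 1] S) 0 0 ≤ (gaussStep^[k + 1] S) 1 1 := by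
  by_contra! hlt
  set T : ℕ → Matrix (Fin 2) (Fin 2) ℝ := fun k ↦ gaussStep^[k + 1] S
  have hT : ∀ k, (T k).PosDef := fun k ↦ hS.iterate_gaussStep (k + 1)
  have hsucc : ∀ k, T (k + 1) = gaussStep (T k) := fun k ↦ Function.iterate_succ_apply' _ _ _
  have hred : ∀ k, IsSizeReduced (T k) := fun k ↦ by
    simpa only [T, Function.iterate_succ_apply'] using (hS.iterate_gaussStep k).isSizeReduced_gaussStep
  have hdiag : ∀ k, T (k + 1) 0 0 = T k 1 1 := fun k ↦ by rw [hsucc, gaussStep_zero_zero]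
  have hdecay : ∀ k, T (k + 1) 1 1 ≤ 3⁻¹ * T k 1 1 := fun k ↦ by
    have := three_mul_lt_of_gaussStep_one_one_lt (hT (k + 1)) (hred (k + 1)) (hlt (k + 1))
      (by rw [← hsucc, ← hdiag (k + 1)]; exact hlt (k + 2))
    rw [hdiag] at this
    linarith
  have hlim : Tendsto (fun k ↦ T k 1 1 * T (k + 1) 1 1) atTop (𝓝 0) := by
    have h := tendsto_zero_of_succ_le_mul (fun k ↦ (hT k).diag_pos.le) (by norm_num) (by norm_num)
      hdecay
    simpa using h.mul (h.comp (tendsto_add_atTop_nat 1))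
  have hdet : ∀ k, S.det ≤ T k 1 1 * T (k + 1) 1 1 := fun k ↦ by
    have h : (T (k + 1)).det = S.det := det_iterate_gaussStep S (k + 2)
    rw [det_fin_two, hdiag, (hT (k + 1)).apply_one_zero] at h
    nlinarith [mul_self_nonneg (T (k + 1) 0 1)]
  exact hS.det_pos.not_ge (ge_of_tendsto' hlim hdet)

theorem IsSizeReduced.exists_sign {T : Matrix (Fin 2) (Fin 2) ℝ} (hred : IsSizeReduced T)
    (hle : T 0 0 ≤ T 1 1) :
    ∃ ε : ℝ, (ε = 1 ∨ ε = -1) ∧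
      0 ≤ -(2 * (!![ε, 0; 0, 1] * T * !![ε, 0; 0, 1]) 0 1) ∧
      -(2 * (!![ε, 0; 0, 1] * T * !![ε, 0; 0, 1]) 0 1) ≤ (!![ε, 0; 0, 1] * T * !![ε, 0; 0, 1]) 0 0 ∧
      (!![ε, 0; 0, 1] * T * !![ε, 0; 0, 1]) 0 0 ≤ (!![ε, 0; 0, 1] * T * !![ε, 0; 0, 1]) 1 1 := by
  have hconj : ∀ ε : ℝ, !![ε, 0; 0, 1] * T * !![ε, 0; 0, 1] =
      !![ε ^ 2 * T 0 0, ε * T 0 1; ε * T 1 0, T 1 1] := fun ε ↦ by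
    ext i j
    fin_cases i <;> fin_cases j <;> simp [mul_apply, Fin.sum_univ_two, vecMul, dotProduct] <;> ring
  obtain ⟨ε, hε, hflip⟩ : ∃ ε : ℝ, (ε = 1 ∨ ε = -1) ∧ ε * T 0 1 = -|T 0 1| := by
    rcases le_or_gt (T 0 1) 0 with h | h
    · exact ⟨1, Or.inl rfl, by rw [abs_of_nonpos h]; ring⟩
    · exact ⟨-1, Or.inr rfl, by rw [abs_of_pos h]; ring⟩
  have hsq : ε ^ 2 = 1 := by rcases hε with rfl | rfl <;> norm_num
  refine ⟨ε, hε, ?_⟩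
  simp only [hconj, of_apply, cons_val', cons_val_zero, cons_val_one, empty_val',
    cons_val_fin_one, hflip, hsq, one_mul]
  rw [IsSizeReduced, abs_mul, abs_two] at hred
  exact ⟨by linarith [abs_nonneg (T 0 1)], by linarith, hle⟩

/-- The Gauss reduction algorithm terminates: for any positive definite
2×2 symmetric matrix `S`, after finitely many Gauss steps one reaches a
matrix with `s₁₁ ≤ s₂₂` which, after a possible sign change of the first
basis vector, satisfies `0 ≤ −2s₁₂ ≤ s₁₁ ≤ s₂₂`. -/
theorem gauss_algorithm_terminates (S : Matrix (Fin 2) (Fin 2) ℝ)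
    (hS : S.PosDef) :
    ∃ (k : ℕ) (ε : ℝ), (ε = 1 ∨ ε = -1) ∧
      (gaussStep^[k] S) 0 0 ≤ (gaussStep^[k] S) 1 1 ∧
      (let T' := !![ε, 0; 0, (1 : ℝ)] * (gaussStep^[k] S) * !![ε, 0; 0, (1 : ℝ)];
        0 ≤ -(2 * T' 0 1) ∧ -(2 * T' 0 1) ≤ T' 0 0 ∧ T' 0 0 ≤ T' 1 1) := by
  obtain ⟨k, hk⟩ := exists_iterate_gaussStep_zero_zero_le hS
  have hred : IsSizeReduced (gaussStep^[k + 1] S) := by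
    rw [Function.iterate_succ_apply']
    exact (hS.iterate_gaussStep k).isSizeReduced_gaussStep
  obtain ⟨ε, hε, hT'⟩ := hred.exists_sign hk
  exact ⟨k + 1, ε, hε, hk, hT'⟩
end
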